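/- There exist x* ∈ (0,∞) and b* ∈ (0,1) such that for every b ∈ (0,b*) and every x ∈ (0,x*): φ_1(bx) − (1/b)·φ_{1,b}(x) < 0, b·φ_{1,b}(x) − φ_1(x) < 0, and Ψ_b(x) < 0. -/

import Mathlib

/-!
For small arguments all three functions are linear to leading order. Expanding the exponential
to second order inside an integral against `cos η` over a full period (where `∫ cos` vanishes)
gives `φ_1(y) = (8/3) y + O(y²)` and, after factoring out `e^{-x}`,
`φ_{1,b}(x) = e^{-x} π b x + O(b² x)`. So `φ_1(bx) ≈ (8/3) bx`, `φ_{1,b}(x)/b ≈ π x`,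
`b φ_{1,b}(x) ≈ π b² x` and `φ_1(x) ≈ (8/3) x`, and each inequality comes down to `8/3 < π`,
which leaves enough room to absorb the errors once `b < 1/1000` and `x < 1/100`.
-/

open MeasureTheory Real

noncomputable section

namespace DCV15

/-- `φ_1(x) = ∫_0^{2π} e^{−2x·sin(η/2)} cos η dη`. -/
def phi1 (x : ℝ) : ℝ :=
  ∫ η in (0:ℝ)..(2*π), Real.exp (-2*x*Real.sin (η/2)) * Real.cos η

/-- `φ_{1,b}(x) = ∫_0^{2π} e^{−x·√(1+b²−2b·cos η)} cos η dη`. -/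
def phi1b (b x : ℝ) : ℝ :=
  ∫ η in (0:ℝ)..(2*π), Real.exp (-x * Real.sqrt (1 + b^2 - 2*b*Real.cos η)) * Real.cos η

/-- `Ψ_b(x) = φ_1(x) + φ_1(bx) − (b+1/b)·φ_{1,b}(x)`. -/
def Psi (b x : ℝ) : ℝ := phi1 x + phi1 (b*x) - (b + 1/b) * phi1b b x

lemma integral_sin_half_mul_cos : ∫ η in (0:ℝ)..(2*π), sin (η/2) * cos η = -(4/3) := by
  have hderiv : ∀ η ∈ Set.uIcc (0:ℝ) (2*π),
      HasDerivAt (fun s ↦ -(1/3) * cos (3*s/2) + cos (s/2)) (sin (η/2) * cos η) η := by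
    intro η _
    have h3 : HasDerivAt (fun s : ℝ ↦ 3*s/2) (3/2) η := by
      simpa using ((hasDerivAt_id η).const_mul (3:ℝ)).div_const 2
    have h1 : HasDerivAt (fun s : ℝ ↦ s/2) (1/2) η := by
      simpa using (hasDerivAt_id η).div_const 2
    refine ((h3.cos.const_mul _).add h1.cos).congr_deriv ?_
    have hsin3 : sin (3*η/2) = sin (η/2) * cos η + cos (η/2) * sin η := by
      rw [← sin_add]; ring_nf
    have hsin : sin η = 2 * sin (η/2) * cos (η/2) := by rw [← sin_two_mul]; ring_nf
    have hcos : cos η = 2 * cos (η/2)^2 - 1 := by rw [← cos_two_mul]; ring_nf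
    rw [hsin3, hsin, hcos]
    ring
  rw [intervalIntegral.integral_eq_sub_of_hasDerivAt hderiv
    (by apply Continuous.intervalIntegrable; fun_prop)]
  simp [show 3*(2*π)/2 = π + 2*π by ring, cos_add]
  norm_num

lemma abs_integral_exp_mul_cos_sub_le {f : ℝ → ℝ} {M : ℝ} (hf : Continuous f)
    (hfM : ∀ η, |f η| ≤ M) (hM : M ≤ 1) :
    |(∫ η in (0:ℝ)..(2*π), exp (f η) * cos η) - ∫ η in (0:ℝ)..(2*π), f η * cos η|
      ≤ 2 * π * M^2 := by
  have hsplit : (∫ η in (0:ℝ)..(2*π), exp (f η) * cos η) - ∫ η in (0:ℝ)..(2*π), f η * cos η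
      = ∫ η in (0:ℝ)..(2*π), (exp (f η) - 1 - f η) * cos η := by
    have hcos : ∫ η in (0:ℝ)..(2*π), cos η = 0 := by simp
    have hpt : ∀ η, (exp (f η) - 1 - f η) * cos η = (exp (f η) * cos η - f η * cos η) - cos η :=
      fun η ↦ by ring
    simp_rw [hpt]
    rw [intervalIntegral.integral_sub, intervalIntegral.integral_sub, hcos, sub_zero]
    all_goals apply Continuous.intervalIntegrable; fun_prop
  rw [hsplit, ← Real.norm_eq_abs]
  calc _ ≤ M^2 * |2*π - 0| := by
        refine intervalIntegral.norm_integral_le_of_norm_le_const fun η _ ↦ ?_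
        rw [norm_mul, Real.norm_eq_abs, Real.norm_eq_abs]
        have htaylor := abs_exp_sub_one_sub_id_le ((hfM η).trans hM)
        have hsq : f η ^ 2 ≤ M^2 := sq_le_sq' (abs_le.mp (hfM η)).1 (abs_le.mp (hfM η)).2
        nlinarith [abs_cos_le_one η, abs_nonneg (cos η), abs_nonneg (exp (f η) - 1 - f η)]
    _ = 2 * π * M^2 := by rw [sub_zero, abs_of_pos two_pi_pos]; ring

lemma abs_phi1_sub_le {y : ℝ} (h0 : 0 ≤ y) (h1 : y ≤ 1/2) :
    |phi1 y - 8/3 * y| ≤ 8 * π * y^2 := by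
  have hlin : ∫ η in (0:ℝ)..(2*π), -2*y*sin (η/2) * cos η = 8/3 * y := by
    simp_rw [mul_assoc (-2*y)]
    rw [intervalIntegral.integral_const_mul, integral_sin_half_mul_cos]
    ring
  have hbound : ∀ η, |-2*y*sin (η/2)| ≤ 2*y := fun η ↦ by
    rw [abs_mul, abs_of_nonpos (by linarith)]
    nlinarith [abs_sin_le_one (η/2)]
  have := abs_integral_exp_mul_cos_sub_le (by fun_prop) hbound (by linarith)
  rw [hlin] at this
  unfold phi1
  linarith

lemma abs_one_sub_sqrt_sub_mul_cos_le {b : ℝ} (hb : 0 ≤ b) (η : ℝ) :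
    |1 - √(1 + b^2 - 2*b*cos η) - b * cos η| ≤ b^2 := by
  have hlower : 1 - b * cos η ≤ √(1 + b^2 - 2*b*cos η) :=
    (le_abs_self _).trans <| abs_le_sqrt <| by nlinarith [cos_sq_le_one η]
  have hupper : √(1 + b^2 - 2*b*cos η) ≤ 1 - b * cos η + b^2 := by
    rw [sqrt_le_iff]
    constructor
    · nlinarith [cos_le_one η, sq_nonneg (b - 1)]
    · nlinarith [sq_nonneg (cos η - b), sq_nonneg b]
  rw [abs_le]
  constructor <;> linarith

lemma abs_integral_one_sub_sqrt_mul_cos_sub_le {b : ℝ} (hb : 0 ≤ b) :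
    |(∫ η in (0:ℝ)..(2*π), (1 - √(1 + b^2 - 2*b*cos η)) * cos η) - π * b| ≤ 2 * π * b^2 := by
  have hmain : π * b = ∫ η in (0:ℝ)..(2*π), b * cos η * cos η := by
    simp_rw [mul_assoc, ← sq]
    rw [intervalIntegral.integral_const_mul, integral_cos_sq]
    simp; ring
  rw [hmain, ← intervalIntegral.integral_sub (by apply Continuous.intervalIntegrable; fun_prop)
    (by apply Continuous.intervalIntegrable; fun_prop), ← Real.norm_eq_abs]
  calc _ ≤ b^2 * |2*π - 0| := by
        refine intervalIntegral.norm_integral_le_of_norm_le_const fun η _ ↦ ?_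
        rw [← sub_mul, norm_mul, Real.norm_eq_abs, Real.norm_eq_abs]
        exact (mul_le_of_le_one_right (abs_nonneg _) (abs_cos_le_one η)).trans
          (abs_one_sub_sqrt_sub_mul_cos_le hb η)
    _ = 2 * π * b^2 := by rw [sub_zero, abs_of_pos two_pi_pos]; ring

/-- Factoring out `e^{-x}` leaves an exponent of size `O(bx)`, which makes the error relative
to `bx` rather than to `x`. -/
lemma abs_phi1b_sub_le {b x : ℝ} (hb0 : 0 ≤ b) (hb1 : b ≤ 1) (hx0 : 0 ≤ x) (hbx : 2 * b * x ≤ 1) :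
    |phi1b b x - exp (-x) * (π * b * x)| ≤ 2 * π * b^2 * x * (4 * x + 1) := by
  set u : ℝ → ℝ := fun η ↦ √(1 + b^2 - 2*b*cos η)
  have hfactor : phi1b b x = exp (-x) * ∫ η in (0:ℝ)..(2*π), exp (x * (1 - u η)) * cos η := by
    rw [phi1b, ← intervalIntegral.integral_const_mul]
    congr 1; ext η
    rw [← mul_assoc, ← exp_add]
    simp only [u]; ring_nf
  have hsize : ∀ η, |x * (1 - u η)| ≤ 2 * b * x := fun η ↦ by
    have hquad := abs_le.mp (abs_one_sub_sqrt_sub_mul_cos_le hb0 η)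
    have h1u : |1 - u η| ≤ 2 * b := by
      rw [abs_le]; constructor <;> nlinarith [neg_one_le_cos η, cos_le_one η]
    rw [abs_mul, abs_of_nonneg hx0]
    linarith [mul_le_mul_of_nonneg_left h1u hx0]
  have htaylor := abs_integral_exp_mul_cos_sub_le (by fun_prop) hsize hbx
  have hlin : ∫ η in (0:ℝ)..(2*π), x * (1 - u η) * cos η
      = x * ∫ η in (0:ℝ)..(2*π), (1 - u η) * cos η := by
    simp_rw [mul_assoc x]; exact intervalIntegral.integral_const_mul _ _
  have hcos := abs_integral_one_sub_sqrt_mul_cos_sub_le hb0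
  rw [hlin] at htaylor
  have hexp : exp (-x) ≤ 1 := exp_le_one_iff.mpr (by linarith)
  rw [hfactor, ← mul_sub, abs_mul, abs_of_pos (exp_pos _)]
  refine (mul_le_of_le_one_left (abs_nonneg _) hexp).trans ?_
  have htaylor' := abs_le.mp htaylor
  have hcos' := abs_le.mp hcos
  rw [abs_le]
  constructor <;> nlinarith

lemma phi1_mem_Icc {y : ℝ} (h0 : 0 ≤ y) (h1 : y ≤ 1/100) :
    phi1 y ∈ Set.Icc (12/5 * y) (3 * y) := by
  have herr : 8 * π * y^2 ≤ 13/50 * y := by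
    have : π * y ≤ 315/10000 := by nlinarith [pi_lt_d2, pi_pos]
    nlinarith [mul_le_mul_of_nonneg_right this h0]
  have := abs_le.mp (abs_phi1_sub_le h0 (by linarith))
  constructor <;> linarith

lemma phi1b_mem_Icc {b x : ℝ} (hb0 : 0 ≤ b) (hb1 : b ≤ 1/1000) (hx0 : 0 ≤ x) (hx1 : x ≤ 1/100) :
    phi1b b x ∈ Set.Icc (31/10 * (b * x)) (16/5 * (b * x)) := by
  have hbx : 0 ≤ b * x := mul_nonneg hb0 hx0
  have herr : 2 * π * b^2 * x * (4 * x + 1) ≤ 1/100 * (b * x) := by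
    have : π * (b * (4 * x + 1)) ≤ 1/200 := by
      have : b * (4 * x + 1) ≤ 1/1000 * (104/100) := by nlinarith
      nlinarith [pi_lt_d2, pi_pos]
    nlinarith
  have hmain_lower : 311/100 * (b * x) ≤ exp (-x) * (π * b * x) := by
    have : 311/100 ≤ exp (-x) * π := by
      nlinarith [mul_le_mul_of_nonneg_right (add_one_le_exp (-x)) pi_pos.le, pi_gt_d4]
    nlinarith
  have hmain_upper : exp (-x) * (π * b * x) ≤ 315/100 * (b * x) := by
    have : exp (-x) * π ≤ 315/100 := by
      nlinarith [exp_le_one_iff.mpr (neg_nonpos.mpr hx0), pi_lt_d2, exp_pos (-x)]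
    nlinarith
  have := abs_le.mp (abs_phi1b_sub_le hb0 (by linarith) hx0 (by nlinarith))
  constructor <;> linarith

/-- There exist `x* ∈ (0,∞)` and `b* ∈ (0,1)` such that for every `b ∈ (0,b*)` and every
`x ∈ (0,x*)`: `φ_1(bx) − (1/b)·φ_{1,b}(x) < 0`, `b·φ_{1,b}(x) − φ_1(x) < 0` and `Ψ_b(x) < 0`. -/
theorem negativity_near_zero :
    ∃ xs : ℝ, 0 < xs ∧ ∃ bs : ℝ, bs ∈ Set.Ioo (0:ℝ) 1 ∧
      ∀ b ∈ Set.Ioo (0:ℝ) bs, ∀ x ∈ Set.Ioo (0:ℝ) xs,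
        phi1 (b*x) - (1/b) * phi1b b x < 0 ∧
        b * phi1b b x - phi1 x < 0 ∧
        Psi b x < 0 := by
  refine ⟨1/100, by norm_num, 1/1000, ⟨by norm_num, by norm_num⟩, ?_⟩
  rintro b ⟨hb0, hb1⟩ x ⟨hx0, hx1⟩
  have hbx : 0 < b * x := mul_pos hb0 hx0
  obtain ⟨hphi1_lower, hphi1_upper⟩ := phi1_mem_Icc hx0.le hx1.le
  obtain ⟨-, hphi1_bx_upper⟩ := phi1_mem_Icc hbx.le (by nlinarith)
  obtain ⟨hphi1b_lower, hphi1b_upper⟩ := phi1b_mem_Icc hb0.le hb1.le hx0.le hx1.le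
  have hdiv_lower : 31/10 * x ≤ (1/b) * phi1b b x := by
    rw [one_div_mul_eq_div, le_div_iff₀ hb0]; linarith
  have hmul_upper : b * phi1b b x ≤ 16/5 * b^2 * x := by nlinarith
  refine ⟨by nlinarith, by nlinarith, ?_⟩
  rw [Psi, add_mul]
  nlinarith

end DCV15
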